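/- Let k be a nonnegative integer, n ≥ 1 an integer, and λ a nonnegative real number which is an eigenvalue of the Laplacian on the round sphere S^{n−1}, i.e. λ = l(l + n − 2) for some nonnegative integer l, with k + l even. Then (k² + λ − n)² + n²(k² − 1) ≥ 0. -/

import Mathlib

/-!
For `k ≥ 1` both summands are nonnegative. For `k = 0` the expression equals `λ (λ - 2n)`, and
parity forces `l` to be even: either `l = 0`, so `λ = 0`, or `l ≥ 2`, so
`λ - 2n = (l - 2)(l + n) ≥ 0`.
-/

theorem Nat.eq_zero_or_two_le_of_even {l : ℕ} (hl : Even l) : l = 0 ∨ 2 ≤ l := by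
  obtain ⟨m, rfl⟩ := hl
  omega

theorem two_mul_le_mul_add_sub_two {R : Type*} [CommRing R] [LinearOrder R]
    [IsStrictOrderedRing R] {l n : R} (hl : 2 ≤ l) (hn : 0 ≤ n) :
    2 * n ≤ l * (l + n - 2) := by
  nlinarith [mul_nonneg (sub_nonneg.mpr hl) (add_nonneg (zero_le_two.trans hl) hn)]

theorem stability_inequality_general (k l n : ℕ) (lam : ℝ)
    (hlam : lam = (l : ℝ) * ((l : ℝ) + (n : ℝ) - 2)) (hkl : Even (k + l)) :
    0 ≤ ((k : ℝ) ^ 2 + lam - (n : ℝ)) ^ 2 + (n : ℝ) ^ 2 * ((k : ℝ) ^ 2 - 1) := by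
  rcases Nat.eq_zero_or_pos k with rfl | hk
  · have hl : Even l := by simpa using hkl
    have hlam_mul : 0 ≤ lam * (lam - 2 * n) := by
      rcases Nat.eq_zero_or_two_le_of_even hl with rfl | hl2
      · simp [hlam]
      · have h2n : 2 * (n : ℝ) ≤ lam :=
          hlam ▸ two_mul_le_mul_add_sub_two (by exact_mod_cast hl2) n.cast_nonneg
        exact mul_nonneg (by linarith [n.cast_nonneg (α := ℝ)]) (by linarith)
    calc 0 ≤ lam * (lam - 2 * n) := hlam_mul
      _ = _ := by push_cast; ring
  · have hk1 : (1 : ℝ) ≤ (k : ℝ) ^ 2 := one_le_pow₀ (by exact_mod_cast hk)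
    exact add_nonneg (sq_nonneg _) (mul_nonneg (sq_nonneg _) (by linarith))

/-- Stability inequality: if `λ = l(l + n − 2)` is an eigenvalue of the Laplacian on `S^{n−1}`
and `k + l` is even, then `(k² + λ − n)² + n²(k² − 1) ≥ 0`. -/
theorem stability_inequality (k l n : ℕ) (hn : 1 ≤ n) (lam : ℝ) (hlam0 : 0 ≤ lam)
    (hlam : lam = (l : ℝ) * ((l : ℝ) + (n : ℝ) - 2)) (hkl : Even (k + l)) :
    0 ≤ ((k : ℝ) ^ 2 + lam - (n : ℝ)) ^ 2 + (n : ℝ) ^ 2 * ((k : ℝ) ^ 2 - 1) :=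
  stability_inequality_general k l n lam hlam hkl
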